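/- With the optimal bandwidth choice, the optimal MSE for g epochs with total sample size N satisfies MSE(N/g, g) = C_* (g ψ'(g))^{4/5} N^{−4/5}; since g ↦ g ψ'(g) is decreasing in g, MSE(N/g, g) is a decreasing function of the number of epochs g. -/

import Mathlib

open Real

/-- The trigamma function, `ψ'(x) = ∑_{k≥0} 1/(x+k)²`. -/
noncomputable def trigamma (x : ℝ) : ℝ := ∑' k : ℕ, 1 / (x + k) ^ 2

/-! The identity is `(N / g)^(-4/5) = g^(4/5) N^(-4/5)`. For the monotonicity it suffices that
`(x + 1) ψ'(x + 1) < x ψ'(x)` for `x > 0`: by the recurrence `ψ'(x) = 1/x² + ψ'(x + 1)` this is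
`ψ'(x + 1) < 1/x`, and `1/x` is the telescoping sum `∑ₖ (1/(x+k) - 1/(x+k+1))`, whose terms
`1/((x+k)(x+k+1))` dominate the terms `1/(x+k+1)²` of `ψ'(x + 1)`. -/

open Filter Topology

theorem hasSum_sub_succ_of_antitone {f : ℕ → ℝ} (hf : Antitone f)
    (hf0 : Tendsto f atTop (𝓝 0)) : HasSum (fun n => f n - f (n + 1)) (f 0) := by
  rw [hasSum_iff_tendsto_nat_of_nonneg fun n => sub_nonneg.2 (hf n.le_succ)]
  simp_rw [Finset.sum_range_sub']
  simpa using hf0.const_sub (f 0)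

theorem summable_trigamma (x : ℝ) : Summable fun k : ℕ => 1 / (x + k) ^ 2 := by
  simpa [rpow_two, sq_abs, add_comm] using
    (summable_one_div_nat_add_rpow x 2).2 one_lt_two

theorem trigamma_nonneg (x : ℝ) : 0 ≤ trigamma x :=
  tsum_nonneg fun _ => by positivity

theorem trigamma_eq_one_div_sq_add_trigamma_add_one (x : ℝ) :
    trigamma x = 1 / x ^ 2 + trigamma (x + 1) := by
  rw [trigamma, (summable_trigamma x).tsum_eq_zero_add, trigamma]
  push_cast
  ring_nf

theorem one_div_add_one_sq_lt_inv_sub_inv {y : ℝ} (hy : 0 < y) :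
    1 / (y + 1) ^ 2 < y⁻¹ - (y + 1)⁻¹ := by
  rw [inv_sub_inv hy.ne' (by positivity), add_sub_cancel_left]
  apply one_div_lt_one_div_of_lt (by positivity)
  nlinarith

theorem trigamma_add_one_lt_inv {x : ℝ} (hx : 0 < x) : trigamma (x + 1) < x⁻¹ := by
  have htel : HasSum (fun k : ℕ => (x + k)⁻¹ - (x + k + 1)⁻¹) x⁻¹ := by
    simpa [← add_assoc] using hasSum_sub_succ_of_antitone (f := fun k : ℕ => (x + k)⁻¹)
      (fun m n hmn => by dsimp only; gcongr)
      (tendsto_inv_atTop_zero.comp (tendsto_atTop_add_const_left _ x tendsto_natCast_atTop_atTop))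
  have hlt (k : ℕ) : 1 / (x + 1 + k) ^ 2 < (x + k)⁻¹ - (x + k + 1)⁻¹ := by
    convert one_div_add_one_sq_lt_inv_sub_inv (by positivity : 0 < x + k) using 2; ring
  exact hasSum_lt (fun k => (hlt k).le) (hlt 0) (summable_trigamma (x + 1)).hasSum htel

theorem add_one_mul_trigamma_add_one_lt {x : ℝ} (hx : 0 < x) :
    (x + 1) * trigamma (x + 1) < x * trigamma x := by
  have hrec : x * trigamma x = x⁻¹ + x * trigamma (x + 1) := by
    rw [trigamma_eq_one_div_sq_add_trigamma_add_one x]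
    field_simp
  linarith [trigamma_add_one_lt_inv hx]

theorem strictAntiOn_natCast_mul_trigamma :
    StrictAntiOn (fun g : ℕ => (g : ℝ) * trigamma g) (Set.Ici 1) := by
  intro g₁ hg₁ _ _ h
  refine Nat.rel_of_forall_rel_succ_of_le_of_lt (· > ·)
    (f := fun g : ℕ => (g : ℝ) * trigamma g) (fun n hn => ?_) hg₁ h
  simpa using add_one_mul_trigamma_add_one_lt (x := n) (by exact_mod_cast hn)

theorem rpow_mul_div_rpow_neg {a b N : ℝ} (ha : 0 ≤ a) (hb : 0 < b) (hN : 0 ≤ N) (p : ℝ) :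
    a ^ p * (N / b) ^ (-p) = (b * a) ^ p * N ^ (-p) := by
  rw [div_rpow hN hb.le, mul_rpow hb.le ha, rpow_neg hb.le]
  field_simp

/-- With the optimal bandwidth, the optimal MSE with `g` epochs and total sample size `N`
satisfies `MSE(N/g, g) = C_* (g ψ'(g))^{4/5} N^{−4/5}`, and since `g ↦ g ψ'(g)` is
decreasing, `g ↦ MSE(N/g, g)` is a decreasing function of the number of epochs. -/
theorem mse_epochs_decreasing (Cstar : ℝ) (hC : 0 < Cstar) (N : ℝ) (hN : 0 < N) :
    let MSE : ℝ → ℝ → ℝ := fun n g => Cstar * trigamma g ^ ((4 : ℝ) / 5) * n ^ (-(4 : ℝ) / 5)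
    (∀ g : ℕ, 1 ≤ g →
      MSE (N / g) g = Cstar * ((g : ℝ) * trigamma g) ^ ((4 : ℝ) / 5) * N ^ (-(4 : ℝ) / 5)) ∧
    (∀ g₁ g₂ : ℕ, 1 ≤ g₁ → g₁ < g₂ → MSE (N / g₂) g₂ < MSE (N / g₁) g₁) := by
  intro MSE
  have hMSE (g : ℕ) (hg : 1 ≤ g) :
      MSE (N / g) g = Cstar * ((g : ℝ) * trigamma g) ^ ((4 : ℝ) / 5) * N ^ (-(4 : ℝ) / 5) := by
    simp only [MSE, mul_assoc, neg_div]
    rw [rpow_mul_div_rpow_neg (trigamma_nonneg g) (by exact_mod_cast hg) hN.le]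
  refine ⟨hMSE, fun g₁ g₂ hg₁ h => ?_⟩
  rw [hMSE g₁ hg₁, hMSE g₂ (hg₁.trans h.le)]
  have hψ := strictAntiOn_natCast_mul_trigamma hg₁ (Set.mem_Ici.2 (hg₁.trans h.le)) h
  have hψ₂ : 0 ≤ (g₂ : ℝ) * trigamma g₂ := mul_nonneg g₂.cast_nonneg (trigamma_nonneg g₂)
  gcongr
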